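/- With the Tits form Q(a,b,c) = (‖a‖² + ‖b‖² + ‖c‖² − (2n)²)/2 on triples of compositions of 2n, if a = (1, 2n−2, 1), b is a symmetric composition of 2n with 3 positive parts, c is a symmetric composition of 2n with positive parts, and Q(a,b,c) = 1, then (a,b,c) = ((1,2,1),(1,2,1),(1,2,1)) or (a,b,c) = ((1,4,1),(2,2,2),(1,1,2,1,1)). -/

import Mathlib

/-- `‖a‖²`, the sum of squares of the parts of a composition. -/
def sumSq (l : List ℕ) : ℕ := (l.map fun x => x ^ 2).sum

/-- The Tits quadratic form of a triple of compositions of `2n`. -/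
def titsQ (n : ℕ) (a b c : List ℕ) : ℤ :=
  ((sumSq a : ℤ) + sumSq b + sumSq c - (2 * n) ^ 2) / 2

lemma sum_le_sumSq (l : List ℕ) : l.sum ≤ sumSq l := by
  induction l with
  | nil => simp [sumSq]
  | cons x t ih =>
    simp only [sumSq, List.map_cons, List.sum_cons] at *
    have : x ≤ x ^ 2 := Nat.le_self_pow two_ne_zero x
    omega

lemma sumSq_parity (l : List ℕ) : sumSq l % 2 = l.sum % 2 := by
  induction l with
  | nil => rfl
  | cons x t ih =>
    simp only [sumSq, List.map_cons, List.sum_cons] at *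
    have h1 : x ^ 2 % 2 = (x % 2) ^ 2 % 2 := Nat.pow_mod x 2 2
    have h2 : x % 2 = 0 ∨ x % 2 = 1 := by omega
    rcases h2 with h2 | h2 <;> rw [h2] at h1 <;> norm_num at h1 <;> omega

lemma length_le_sum (l : List ℕ) (h : ∀ x ∈ l, 0 < x) : l.length ≤ l.sum := by
  induction l with
  | nil => simp
  | cons x t ih =>
    simp only [List.length_cons, List.sum_cons]
    have hx : 0 < x := h x (by simp)
    have := ih (fun y hy => h y (by simp [hy]))
    omega

lemma m_le_five (m : ℕ) (h9 : m ^ 2 + 4 * m + 4 ≤ 9 * m + 6) : m ≤ 5 := by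
  by_contra h
  push_neg at h
  nlinarith [h9, h]

lemma csum4 (c : List ℕ) (hpos : ∀ x ∈ c, 0 < x) (hsum : c.sum = 4)
    (hsq : sumSq c = 6) (hsym : c.reverse = c) : c = [1, 2, 1] := by
  have hlen : c.length ≤ 4 := hsum ▸ length_le_sum c hpos
  rcases c with _ | ⟨x1, _ | ⟨x2, _ | ⟨x3, _ | ⟨x4, _ | ⟨x5, t⟩⟩⟩⟩⟩
  · simp at hsum
  · simp [sumSq] at hsum hsq
    subst hsum; norm_num at hsq
  · simp [sumSq] at hsum hsq hsym
    have h : x1 = 2 ∧ x2 = 2 := by omega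
    obtain ⟨h1, h2⟩ := h; subst h1; subst h2; norm_num at hsq
  · have h1 : 0 < x1 := hpos x1 (by simp)
    have h2 : 0 < x2 := hpos x2 (by simp)
    simp [List.cons.injEq] at hsym
    simp [sumSq] at hsum
    simp only [List.cons.injEq, and_true]
    omega
  · have h1 : 0 < x1 := hpos x1 (by simp)
    have h2 : 0 < x2 := hpos x2 (by simp)
    simp [List.cons.injEq] at hsym
    simp [sumSq] at hsum hsq
    have h : x1 = 1 ∧ x2 = 1 ∧ x3 = 1 ∧ x4 = 1 := by omega
    obtain ⟨e1, e2, e3, e4⟩ := h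
    subst e1; subst e2; subst e3; subst e4; norm_num at hsq
  · simp at hlen; omega

lemma csum6 (c : List ℕ) (hpos : ∀ x ∈ c, 0 < x) (hsum : c.sum = 6)
    (hsq : sumSq c = 8) (hsym : c.reverse = c) : c = [1, 1, 2, 1, 1] := by
  have hlen : c.length ≤ 6 := hsum ▸ length_le_sum c hpos
  rcases c with _ | ⟨x1, _ | ⟨x2, _ | ⟨x3, _ | ⟨x4, _ | ⟨x5, _ | ⟨x6, _ | ⟨x7, t⟩⟩⟩⟩⟩⟩⟩
  · simp at hsum
  · simp [sumSq] at hsum hsq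
    subst hsum; norm_num at hsq
  · simp [sumSq] at hsum hsq hsym
    have h : x1 = 3 ∧ x2 = 3 := by omega
    obtain ⟨h1, h2⟩ := h; subst h1; subst h2; norm_num at hsq
  · have h1 : 0 < x1 := hpos x1 (by simp)
    have h2 : 0 < x2 := hpos x2 (by simp)
    simp [List.cons.injEq] at hsym
    simp [sumSq] at hsum hsq
    have h : x1 = 1 ∧ x2 = 4 ∧ x3 = 1 ∨ x1 = 2 ∧ x2 = 2 ∧ x3 = 2 := by omega
    rcases h with ⟨e1, e2, e3⟩ | ⟨e1, e2, e3⟩ <;>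
      (subst e1; subst e2; subst e3; norm_num at hsq)
  · have h1 : 0 < x1 := hpos x1 (by simp)
    have h2 : 0 < x2 := hpos x2 (by simp)
    simp [List.cons.injEq] at hsym
    simp [sumSq] at hsum hsq
    have h : x1 = 1 ∧ x2 = 2 ∧ x3 = 2 ∧ x4 = 1 ∨
        x1 = 2 ∧ x2 = 1 ∧ x3 = 1 ∧ x4 = 2 := by omega
    rcases h with ⟨e1, e2, e3, e4⟩ | ⟨e1, e2, e3, e4⟩ <;>
      (subst e1; subst e2; subst e3; subst e4; norm_num at hsq)
  · have h1 : 0 < x1 := hpos x1 (by simp)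
    have h2 : 0 < x2 := hpos x2 (by simp)
    have h3 : 0 < x3 := hpos x3 (by simp)
    simp [List.cons.injEq] at hsym
    simp [sumSq] at hsum
    simp only [List.cons.injEq, and_true]
    omega
  · have h1 : 0 < x1 := hpos x1 (by simp)
    have h2 : 0 < x2 := hpos x2 (by simp)
    have h3 : 0 < x3 := hpos x3 (by simp)
    simp [List.cons.injEq] at hsym
    simp [sumSq] at hsum hsq
    have h : x1 = 1 ∧ x2 = 1 ∧ x3 = 1 ∧ x4 = 1 ∧ x5 = 1 ∧ x6 = 1 := by omega
    obtain ⟨e1, e2, e3, e4, e5, e6⟩ := h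
    subst e1; subst e2; subst e3; subst e4; subst e5; subst e6
    norm_num at hsq
  · simp at hlen; omega

theorem stmt_14 (n : ℕ) (hn : 2 ≤ n) (a b c : List ℕ)
    (ha : a = [1, 2 * n - 2, 1])
    (hbsum : b.sum = 2 * n) (hblen : b.length = 3)
    (hbpos : ∀ x ∈ b, 0 < x) (hbsym : b.reverse = b)
    (hcsum : c.sum = 2 * n) (hcpos : ∀ x ∈ c, 0 < x) (hcsym : c.reverse = c)
    (hQ : titsQ n a b c = 1) :
    (a = [1, 2, 1] ∧ b = [1, 2, 1] ∧ c = [1, 2, 1]) ∨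
      (a = [1, 4, 1] ∧ b = [2, 2, 2] ∧ c = [1, 1, 2, 1, 1]) := by
  -- destructure b
  rcases b with _ | ⟨p, _ | ⟨q, _ | ⟨r, _ | ⟨s, t⟩⟩⟩⟩ <;> simp at hblen
  have hp : 0 < p := hbpos p (by simp)
  have hq : 0 < q := hbpos q (by simp)
  simp [List.cons.injEq] at hbsym
  obtain ⟨hrp, -⟩ := hbsym
  have hpr : p = r := hrp.symm
  subst hpr
  simp at hbsum
  obtain ⟨m, hm2⟩ : ∃ m, m + 2 = 2 * n := ⟨2 * n - 2, by omega⟩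
  have hamem : a = [1, m, 1] := by rw [ha, show 2 * n - 2 = m by omega]
  have hSa : sumSq a = m ^ 2 + 2 := by rw [hamem]; simp [sumSq]; ring
  have hSb : sumSq [p, q, p] = 2 * p ^ 2 + q ^ 2 := by
    simp [sumSq]; ring
  have hasum : a.sum = 2 * n := by subst ha; simp; omega
  -- the total sum of squares is even
  have hpar : 2 ∣ (sumSq a + sumSq [p, q, p] + sumSq c) := by
    have h1 := sumSq_parity a
    have h2 := sumSq_parity [p, q, p]
    have h3 := sumSq_parity c
    simp at h2
    omega
  -- turn hQ into a ℕ equation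
  have hkZ : (sumSq a : ℤ) + sumSq [p, q, p] + sumSq c = (2 * n) ^ 2 + 2 := by
    have hd1 : (2 : ℤ) ∣ ((sumSq a : ℤ) + sumSq [p, q, p] + sumSq c) := by
      exact_mod_cast Int.natCast_dvd_natCast.mpr hpar
    have hd2 : (2 : ℤ) ∣ (2 * (n : ℤ)) ^ 2 := ⟨2 * (n : ℤ) ^ 2, by ring⟩
    have hd : (2 : ℤ) ∣ ((sumSq a : ℤ) + sumSq [p, q, p] + sumSq c
        - (2 * (n : ℤ)) ^ 2) := dvd_sub hd1 hd2
    unfold titsQ at hQ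
    have hmul := Int.ediv_mul_cancel hd
    rw [hQ] at hmul
    linarith only [hmul]
  have hkey : sumSq a + sumSq [p, q, p] + sumSq c = (m + 2) ^ 2 + 2 := by
    have hmz : ((m : ℤ) + 2) = 2 * (n : ℤ) := by exact_mod_cast hm2
    zify
    push_cast
    rw [show ((m : ℤ) + 2) ^ 2 = (2 * (n : ℤ)) ^ 2 by rw [hmz]]
    linarith only [hkZ]
  rw [hSa, hSb] at hkey
  have hexp : (m + 2) ^ 2 = m ^ 2 + 4 * m + 4 := by ring
  have hkey2 : 2 * p ^ 2 + q ^ 2 + sumSq c = 4 * m + 4 := by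
    rw [hexp] at hkey; linarith only [hkey]
  have hSc : 2 * n ≤ sumSq c := hcsum ▸ sum_le_sumSq c
  have hcs : (2 * p + q) ^ 2 ≤ 3 * (2 * p ^ 2 + q ^ 2) := by
    zify
    nlinarith [sq_nonneg ((p : ℤ) - q)]
  have hpq : 2 * p + q = m + 2 := by omega
  have h9 : m ^ 2 + 4 * m + 4 ≤ 9 * m + 6 := by
    rw [hpq, hexp] at hcs
    linarith only [hcs, hkey2, hSc, hm2]
  have hmle : m ≤ 5 := m_le_five m h9
  have hn3 : n ≤ 3 := by omega
  interval_cases n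
  · -- n = 2, m = 2
    have hm' : m = 2 := by omega
    rw [hm'] at hkey2 hpq
    have hp1 : p = 1 := by omega
    have hq2 : q = 2 := by omega
    subst hp1; subst hq2
    norm_num at hkey2
    have hc6 : sumSq c = 6 := by omega
    left
    exact ⟨by rw [ha], rfl, csum4 c hcpos (by omega) hc6 hcsym⟩
  · -- n = 3, m = 4
    have hm' : m = 4 := by omega
    rw [hm'] at hkey2 hpq
    have hpv : p = 1 ∧ q = 4 ∨ p = 2 ∧ q = 2 := by omega
    rcases hpv with ⟨hp1, hq1⟩ | ⟨hp1, hq1⟩ <;> subst hp1 <;> subst hq1 <;>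
      norm_num at hkey2
    · -- sumSq c = 2 < 6, contradiction
      omega
    · right
      have hc8 : sumSq c = 8 := by omega
      exact ⟨by rw [ha], rfl, csum6 c hcpos (by omega) hc8 hcsym⟩
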